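/- (Lemma 2 of the paper, forward direction.) Fix n ≥ 1, positive integers p_1,…,p_n with p = p_1 + ⋯ + p_n, reals ρ_1,…,ρ_n > 0, κ > 0, set α_i = κρ_i, and let V = diag(V_1,…,V_n) be block-diagonal symmetric positive definite with V_i of size p_i × p_i. Let E_i denote the p × p_i matrix whose i-th block is I_{p_i} and all other blocks are zero. Let D be a nonzero real q × p matrix with column blocks D_i satisfying ρ_i‖D_i‖₂ = Δ for all i, where Δ = max_j ρ_j‖D_j‖₂, and set Π = V⁻¹ − V⁻¹(V⁻¹ + DᵀD/(κΔ)²)⁻¹V⁻¹. Then V − V Π V is positive definite, and for every 1 ≤ i ≤ n the block matrix [[I_{p_i}/α_i² + V_i⁻¹, E_iᵀ], [E_i, V − V Π V]] is positive semidefinite but not positive definite. -/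

import Mathlib

open Matrix

/-!
With `W = V⁻¹ + DᵀD/(κΔ)²` one has `V - VΠV = W⁻¹`, which is positive definite. Taking the Schur
complement of the block `W⁻¹`, the `i`-th block matrix is positive semidefinite (resp. definite)
iff `I/α_i² + V_i⁻¹ - E_iᵀ W E_i` is. Since `E_iᵀ V⁻¹ E_i = V_i⁻¹`, `D E_i = D_i` and
`ρ_i‖D_i‖₂ = Δ`, this complement is `(‖D_i‖₂² I - D_iᵀ D_i)/(κΔ)²`: it is positive semidefinite
because `‖D_i x‖ ≤ ‖D_i‖₂‖x‖`, and singular because the operator norm is attained on the unit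
sphere.
-/

/-- The induced 2-norm (largest singular value) of a real matrix. -/
noncomputable def sNorm {m n : Type*} [Fintype m] [Fintype n] [DecidableEq n]
    (M : Matrix m n ℝ) : ℝ :=
  ‖LinearMap.toContinuousLinearMap (Matrix.toEuclideanLin M)‖

/-- The `i`-th column block of a matrix with columns indexed by `(i : Fin n) × Fin (p i)`. -/
def blk {q n : ℕ} {p : Fin n → ℕ} (D : Matrix (Fin q) ((i : Fin n) × Fin (p i)) ℝ)
    (i : Fin n) : Matrix (Fin q) (Fin (p i)) ℝ :=
  Matrix.of fun r j => D r ⟨i, j⟩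

/-- The tall matrix `E_i` whose `i`-th block is `I_{p_i}` and other blocks are zero. -/
def Emat {n : ℕ} (p : Fin n → ℕ) (i : Fin n) :
    Matrix ((j : Fin n) × Fin (p j)) (Fin (p i)) ℝ :=
  Matrix.of fun x l => if x = ⟨i, l⟩ then 1 else 0

theorem ContinuousLinearMap.exists_norm_eq_one_and_norm_apply_eq_opNorm {E F : Type*}
    [NormedAddCommGroup E] [NormedSpace ℝ E] [FiniteDimensional ℝ E] [Nontrivial E]
    [SeminormedAddCommGroup F] [NormedSpace ℝ F] (f : E →L[ℝ] F) :
    ∃ x, ‖x‖ = 1 ∧ ‖f x‖ = ‖f‖ := by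
  obtain ⟨x, hx, hmax⟩ := (isCompact_sphere (0 : E) 1).exists_isMaxOn
    (NormedSpace.sphere_nonempty.mpr zero_le_one) f.continuous.norm.continuousOn
  rw [mem_sphere_zero_iff_norm] at hx
  refine ⟨x, hx, le_antisymm (by simpa [hx] using f.le_opNorm x) ?_⟩
  exact f.opNorm_le_of_unit_norm (norm_nonneg _) fun y hy => hmax (mem_sphere_zero_iff_norm.mpr hy)

namespace Matrix

theorem PosDef.sub_mul_inv_mul_conjTranspose_of_fromBlocks₂₂ {m n R : Type*} [Fintype m]
    [Fintype n] [DecidableEq n] [CommRing R] [PartialOrder R] [StarRing R]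
    {A : Matrix m m R} {B : Matrix m n R} {D : Matrix n n R} [Invertible D]
    (hD : D.IsHermitian) (h : (fromBlocks A B Bᴴ D).PosDef) :
    (A - B * D⁻¹ * Bᴴ).PosDef := by
  refine .of_dotProduct_mulVec_pos ((IsHermitian.fromBlocks₂₂ A B hD).mp h.1) fun x hx => ?_
  have hxy : (x ⊕ᵥ -((D⁻¹ * Bᴴ) *ᵥ x)) ≠ 0 := fun h0 => hx (funext fun k => congrFun h0 (.inl k))
  simpa [dotProduct_mulVec, schur_complement_eq₂₂ A B _ _ hD] using h.dotProduct_mulVec_pos hxy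

theorem posSemidef_fromBlocks_transpose_inv_iff {m n : Type*} [Fintype m] [Fintype n]
    [DecidableEq n] {W : Matrix n n ℝ} (hW : W.PosDef) (A : Matrix m m ℝ) (B : Matrix n m ℝ) :
    (fromBlocks A Bᵀ B W⁻¹).PosSemidef ↔ (A - Bᵀ * W * B).PosSemidef := by
  have := hW.isUnit.invertible
  have := hW.inv.isUnit.invertible
  simpa [inv_inv_of_invertible] using PosDef.fromBlocks₂₂ A Bᵀ hW.inv

theorem PosDef.sub_transpose_mul_mul_of_fromBlocks_inv {m n : Type*} [Fintype m]
    [Fintype n] [DecidableEq n] {W : Matrix n n ℝ} (hW : W.PosDef) {A : Matrix m m ℝ}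
    {B : Matrix n m ℝ} (h : (fromBlocks A Bᵀ B W⁻¹).PosDef) : (A - Bᵀ * W * B).PosDef := by
  have := hW.isUnit.invertible
  have := hW.inv.isUnit.invertible
  simpa [inv_inv_of_invertible] using
    PosDef.sub_mul_inv_mul_conjTranspose_of_fromBlocks₂₂ (B := Bᵀ) hW.inv.1 (by simpa using h)

theorem dotProduct_blockDiagonal'_mulVec {o R : Type*} {p : o → Type*} [Fintype o] [DecidableEq o]
    [∀ i, Fintype (p i)] [CommSemiring R] (M : ∀ i, Matrix (p i) (p i) R)
    (x y : (i : o) × p i → R) :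
    x ⬝ᵥ (blockDiagonal' M *ᵥ y) = ∑ i, (fun j => x ⟨i, j⟩) ⬝ᵥ (M i *ᵥ fun j => y ⟨i, j⟩) := by
  simp only [dotProduct, mulVec, ← Finset.univ_sigma_univ, Finset.sum_sigma, Finset.mul_sum]
  refine Finset.sum_congr rfl fun i _ => Finset.sum_congr rfl fun k _ => ?_
  rw [Finset.sum_eq_single i]
  · simp [blockDiagonal'_apply_eq]
  · intro j _ hj
    exact Finset.sum_eq_zero fun l _ => by rw [blockDiagonal'_apply_ne _ _ _ (Ne.symm hj)]; simp
  · simp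

theorem PosDef.blockDiagonal' {o R : Type*} {p : o → Type*} [Fintype o] [DecidableEq o]
    [∀ i, Fintype (p i)] [CommRing R] [PartialOrder R] [StarRing R] [IsOrderedRing R]
    {M : ∀ i, Matrix (p i) (p i) R} (h : ∀ i, (M i).PosDef) : (blockDiagonal' M).PosDef := by
  refine .of_dotProduct_mulVec_pos (isHermitian_blockDiagonal'_iff.mpr fun i => (h i).1)
    fun x hx => ?_
  obtain ⟨⟨i, k⟩, hik⟩ := Function.ne_iff.mp hx
  rw [dotProduct_blockDiagonal'_mulVec]
  exact Finset.sum_pos' (fun j _ => (h j).posSemidef.dotProduct_mulVec_nonneg _)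
    ⟨i, Finset.mem_univ _, (h i).dotProduct_mulVec_pos (Function.ne_iff.mpr ⟨k, hik⟩)⟩

theorem inv_blockDiagonal' {o R : Type*} {p : o → Type*} [Fintype o] [DecidableEq o]
    [∀ i, Fintype (p i)] [∀ i, DecidableEq (p i)] [CommRing R] {M : ∀ i, Matrix (p i) (p i) R}
    (h : ∀ i, IsUnit (M i).det) :
    (blockDiagonal' M)⁻¹ = blockDiagonal' fun i => (M i)⁻¹ := by
  refine inv_eq_left_inv ?_
  rw [← blockDiagonal'_mul, ← blockDiagonal'_one]
  exact congrArg _ (funext fun i => nonsing_inv_mul _ (h i))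

theorem sub_mul_inv_sub_inv_mul_mul_inv_mul_eq {n R : Type*} [Fintype n] [DecidableEq n]
    [CommRing R] {V : Matrix n n R} (hV : IsUnit V.det) (X : Matrix n n R) :
    V - V * (V⁻¹ - V⁻¹ * X * V⁻¹) * V = X := by
  rw [Matrix.mul_sub, Matrix.sub_mul, mul_nonsing_inv V hV, Matrix.one_mul,
    ← Matrix.mul_assoc, ← Matrix.mul_assoc, mul_nonsing_inv V hV, Matrix.one_mul,
    Matrix.mul_assoc, nonsing_inv_mul V hV, Matrix.mul_one, sub_sub_cancel]

theorem dotProduct_smul_one_sub_transpose_mul_self_mulVec {m n R : Type*} [Fintype m] [Fintype n]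
    [DecidableEq n] [CommRing R] (s : R) (M : Matrix m n R) (x : n → R) :
    x ⬝ᵥ ((s • 1 - Mᵀ * M) *ᵥ x) = s * (x ⬝ᵥ x) - (M *ᵥ x) ⬝ᵥ (M *ᵥ x) := by
  rw [sub_mulVec, dotProduct_sub, smul_mulVec, one_mulVec, dotProduct_smul, ← mulVec_mulVec,
    dotProduct_mulVec, vecMul_transpose, smul_eq_mul]

end Matrix

theorem EuclideanSpace.norm_toLp_sq {ι : Type*} [Fintype ι] (x : ι → ℝ) :
    ‖WithLp.toLp 2 x‖ ^ 2 = x ⬝ᵥ x := by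
  rw [← real_inner_self_eq_norm_sq, EuclideanSpace.inner_eq_star_dotProduct]
  simp

section sNorm

variable {m n : Type*} [Fintype m] [Fintype n] [DecidableEq n]

theorem sNorm_pos {M : Matrix m n ℝ} (hM : M ≠ 0) : 0 < sNorm M := by
  rw [sNorm, norm_pos_iff]
  exact (toEuclideanLin.trans LinearMap.toContinuousLinearMap).map_ne_zero_iff.mpr hM

theorem dotProduct_mulVec_self_le_sNorm_sq (M : Matrix m n ℝ) (x : n → ℝ) :
    (M *ᵥ x) ⬝ᵥ (M *ᵥ x) ≤ sNorm M ^ 2 * (x ⬝ᵥ x) := by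
  have h := (LinearMap.toContinuousLinearMap (toEuclideanLin M)).le_opNorm (WithLp.toLp 2 x)
  rw [← EuclideanSpace.norm_toLp_sq, ← EuclideanSpace.norm_toLp_sq, sNorm, ← mul_pow]
  simp only [LinearMap.coe_toContinuousLinearMap', toLpLin_toLp, toLin'_apply] at h
  gcongr

theorem exists_ne_zero_dotProduct_mulVec_self_eq_sNorm_sq [Nonempty n] (M : Matrix m n ℝ) :
    ∃ x ≠ 0, (M *ᵥ x) ⬝ᵥ (M *ᵥ x) = sNorm M ^ 2 * (x ⬝ᵥ x) := by
  obtain ⟨v, hv, hfv⟩ := (LinearMap.toContinuousLinearMap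
    (toEuclideanLin M)).exists_norm_eq_one_and_norm_apply_eq_opNorm
  refine ⟨v.ofLp, fun h => ?_, ?_⟩
  · simp [show v = 0 from WithLp.ofLp_injective 2 h] at hv
  · rw [← EuclideanSpace.norm_toLp_sq, ← EuclideanSpace.norm_toLp_sq, sNorm, ← hfv]
    simp [hv, toLpLin_apply]

theorem posSemidef_sNorm_sq_smul_one_sub_transpose_mul_self (M : Matrix m n ℝ) :
    (sNorm M ^ 2 • 1 - Mᵀ * M).PosSemidef := by
  refine .of_dotProduct_mulVec_nonneg ?_ fun x => ?_
  · exact (isHermitian_one.smul (IsSelfAdjoint.all _)).sub (isHermitian_conjTranspose_mul_self M)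
  · rw [star_trivial, dotProduct_smul_one_sub_transpose_mul_self_mulVec, sub_nonneg]
    exact dotProduct_mulVec_self_le_sNorm_sq M x

theorem not_posDef_sNorm_sq_smul_one_sub_transpose_mul_self [Nonempty n] (M : Matrix m n ℝ) :
    ¬ (sNorm M ^ 2 • 1 - Mᵀ * M).PosDef := fun h => by
  obtain ⟨x, hx, hMx⟩ := exists_ne_zero_dotProduct_mulVec_self_eq_sNorm_sq M
  simpa [dotProduct_smul_one_sub_transpose_mul_self_mulVec, hMx] using h.dotProduct_mulVec_pos hx

end sNorm

section Emat

variable {n : ℕ} {p : Fin n → ℕ}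

theorem transpose_Emat_mul_Emat (i : Fin n) : (Emat p i)ᵀ * Emat p i = 1 := by
  ext k l
  simp [Emat, mul_apply, one_apply, eq_comm]

theorem blockDiagonal'_mul_Emat (B : ∀ j, Matrix (Fin (p j)) (Fin (p j)) ℝ) (i : Fin n) :
    blockDiagonal' B * Emat p i = Emat p i * B i := by
  ext ⟨j, k⟩ l
  rcases eq_or_ne j i with rfl | hji
  · simp [Emat, mul_apply, blockDiagonal'_apply_eq]
  · simp [Emat, mul_apply, blockDiagonal'_apply, hji]

theorem mul_Emat {q : ℕ} (D : Matrix (Fin q) ((j : Fin n) × Fin (p j)) ℝ) (i : Fin n) :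
    D * Emat p i = blk D i := by
  ext r l
  simp [Emat, blk, mul_apply]

theorem transpose_Emat_mul_blockDiagonal'_add_smul_mul_Emat {q : ℕ}
    (B : ∀ j, Matrix (Fin (p j)) (Fin (p j)) ℝ) (D : Matrix (Fin q) ((j : Fin n) × Fin (p j)) ℝ)
    (c : ℝ) (i : Fin n) :
    (Emat p i)ᵀ * (blockDiagonal' B + c • (Dᵀ * D)) * Emat p i
      = B i + c • ((blk D i)ᵀ * blk D i) := by
  rw [Matrix.mul_add, Matrix.add_mul, Matrix.mul_assoc, blockDiagonal'_mul_Emat,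
    ← Matrix.mul_assoc, transpose_Emat_mul_Emat, Matrix.one_mul, Matrix.mul_smul, Matrix.smul_mul,
    ← Matrix.mul_assoc, ← transpose_mul, Matrix.mul_assoc, mul_Emat]

theorem exists_blk_ne_zero {q : ℕ} {D : Matrix (Fin q) ((j : Fin n) × Fin (p j)) ℝ}
    (hD : D ≠ 0) : ∃ i, blk D i ≠ 0 := by
  contrapose! hD
  ext r ⟨i, k⟩
  simpa [blk] using congrFun (congrFun (hD i) r) k

end Emat

theorem stmt_8_general {n q : ℕ} (p : Fin n → ℕ) (hp : ∀ i, 0 < p i)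
    (ρ : Fin n → ℝ) (hρ : ∀ i, 0 < ρ i) (κ : ℝ) (hκ : 0 < κ)
    (α : Fin n → ℝ) (hα : ∀ i, α i = κ * ρ i)
    (Vb : ∀ i : Fin n, Matrix (Fin (p i)) (Fin (p i)) ℝ)
    (hVb : ∀ i, (Vb i).PosDef)
    (V : Matrix ((i : Fin n) × Fin (p i)) ((i : Fin n) × Fin (p i)) ℝ)
    (hV : V = Matrix.blockDiagonal' Vb)
    (D : Matrix (Fin q) ((i : Fin n) × Fin (p i)) ℝ) (hD : D ≠ 0)
    (Δ : ℝ)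
    (hblocks : ∀ i : Fin n, ρ i * sNorm (blk D i) = Δ)
    (Pi : Matrix ((i : Fin n) × Fin (p i)) ((i : Fin n) × Fin (p i)) ℝ)
    (hPi : Pi = V⁻¹ - V⁻¹ * (V⁻¹ + ((κ * Δ) ^ 2)⁻¹ • (Dᵀ * D))⁻¹ * V⁻¹) :
    (V - V * Pi * V).PosDef ∧
    ∀ i : Fin n,
      (Matrix.fromBlocks
          (((α i) ^ 2)⁻¹ • (1 : Matrix (Fin (p i)) (Fin (p i)) ℝ) + (Vb i)⁻¹)
          (Emat p i)ᵀ (Emat p i) (V - V * Pi * V)).PosSemidef ∧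
      ¬ (Matrix.fromBlocks
          (((α i) ^ 2)⁻¹ • (1 : Matrix (Fin (p i)) (Fin (p i)) ℝ) + (Vb i)⁻¹)
          (Emat p i)ᵀ (Emat p i) (V - V * Pi * V)).PosDef := by
  obtain ⟨j, hj⟩ := exists_blk_ne_zero hD
  have hΔ : 0 < Δ := hblocks j ▸ mul_pos (hρ j) (sNorm_pos hj)
  set c := (κ * Δ) ^ 2
  have hc : 0 < c := by positivity
  set W := V⁻¹ + c⁻¹ • (Dᵀ * D)
  have hV_pos : V.PosDef := hV ▸ PosDef.blockDiagonal' hVb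
  have hW : W.PosDef := hV_pos.inv.add_posSemidef
    ((posSemidef_conjTranspose_mul_self D).smul (inv_nonneg.mpr hc.le))
  rw [hPi, sub_mul_inv_sub_inv_mul_mul_inv_mul_eq ((isUnit_iff_isUnit_det V).mp hV_pos.isUnit)]
  refine ⟨hW.inv, fun i => ?_⟩
  have : Nonempty (Fin (p i)) := ⟨⟨0, hp i⟩⟩
  have hs : 0 < sNorm (blk D i) := pos_of_mul_pos_right (hblocks i ▸ hΔ) (hρ i).le
  have hα_sq : ((α i) ^ 2)⁻¹ = c⁻¹ * sNorm (blk D i) ^ 2 := by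
    simp only [c, hα, ← hblocks i]
    field_simp
  have hschur : ((α i) ^ 2)⁻¹ • 1 + (Vb i)⁻¹ - (Emat p i)ᵀ * W * Emat p i
      = c⁻¹ • (sNorm (blk D i) ^ 2 • 1 - (blk D i)ᵀ * blk D i) := by
    simp only [W, hV]
    rw [inv_blockDiagonal' fun i => (isUnit_iff_isUnit_det _).mp (hVb i).isUnit,
      transpose_Emat_mul_blockDiagonal'_add_smul_mul_Emat, hα_sq, smul_sub, smul_smul]
    abel
  rw [posSemidef_fromBlocks_transpose_inv_iff hW, hschur]
  refine ⟨(posSemidef_sNorm_sq_smul_one_sub_transpose_mul_self _).smul (inv_nonneg.mpr hc.le),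
    fun h => not_posDef_sNorm_sq_smul_one_sub_transpose_mul_self (blk D i) ?_⟩
  have := (hschur ▸ PosDef.sub_transpose_mul_mul_of_fromBlocks_inv hW h).smul hc
  rwa [smul_smul, mul_inv_cancel₀ hc.ne', one_smul] at this

/-- **Lemma 2 of the paper, forward direction.** If all blocks of `D ≠ 0` saturate the
sensitivity, `ρ_i‖D_i‖₂ = Δ` for all `i`, and
`Π = V⁻¹ − V⁻¹(V⁻¹ + DᵀD/(κΔ)²)⁻¹V⁻¹`, then `V − VΠV ≻ 0` and for every `i` the block
matrix `[[I/α_i² + V_i⁻¹, E_iᵀ], [E_i, V − VΠV]]` is PSD but not positive definite. -/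
theorem stmt_8 {n q : ℕ} (hn : 1 ≤ n) (p : Fin n → ℕ) (hp : ∀ i, 0 < p i)
    (ρ : Fin n → ℝ) (hρ : ∀ i, 0 < ρ i) (κ : ℝ) (hκ : 0 < κ)
    (α : Fin n → ℝ) (hα : ∀ i, α i = κ * ρ i)
    (Vb : ∀ i : Fin n, Matrix (Fin (p i)) (Fin (p i)) ℝ)
    (hVb : ∀ i, (Vb i).PosDef)
    (V : Matrix ((i : Fin n) × Fin (p i)) ((i : Fin n) × Fin (p i)) ℝ)
    (hV : V = Matrix.blockDiagonal' Vb)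
    (D : Matrix (Fin q) ((i : Fin n) × Fin (p i)) ℝ) (hD : D ≠ 0)
    (Δ : ℝ) (hΔ : Δ = ⨆ j : Fin n, ρ j * sNorm (blk D j))
    (hblocks : ∀ i : Fin n, ρ i * sNorm (blk D i) = Δ)
    (Pi : Matrix ((i : Fin n) × Fin (p i)) ((i : Fin n) × Fin (p i)) ℝ)
    (hPi : Pi = V⁻¹ - V⁻¹ * (V⁻¹ + ((κ * Δ) ^ 2)⁻¹ • (Dᵀ * D))⁻¹ * V⁻¹) :
    (V - V * Pi * V).PosDef ∧
    ∀ i : Fin n,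
      (Matrix.fromBlocks
          (((α i) ^ 2)⁻¹ • (1 : Matrix (Fin (p i)) (Fin (p i)) ℝ) + (Vb i)⁻¹)
          (Emat p i)ᵀ (Emat p i) (V - V * Pi * V)).PosSemidef ∧
      ¬ (Matrix.fromBlocks
          (((α i) ^ 2)⁻¹ • (1 : Matrix (Fin (p i)) (Fin (p i)) ℝ) + (Vb i)⁻¹)
          (Emat p i)ᵀ (Emat p i) (V - V * Pi * V)).PosDef :=
  stmt_8_general p hp ρ hρ κ hκ α hα Vb hVb V hV D hD Δ hblocks Pi hPi
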